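/- arXiv:2304.11866 — 6 statements merged into one kernel-verified Lean document; each statement's English description precedes it below -/
import Mathlib

section
/- There exists a unique continuous function f^α : Δ → ℝ satisfying the self-referential functional equation f^α(u_i(t)) = f(u_i(t)) + α_i·(f^α(t) − b(t)) for all t ∈ Δ and all i ∈ {1,2,3}. -/
noncomputable section

/-- The three vertices of the (unit) Sierpiński gasket:
`x₁ = (0,0)`, `x₂ = (1,0)`, `x₃ = (1/2, √3/2)`. -/
def sgPt : Fin 3 → ℝ × ℝ := ![(0, 0), (1, 0), (1/2, Real.sqrt 3 / 2)]

/-- The three contraction maps `u_i(t) = (t + x_i)/2` generating the Sierpiński gasket. -/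
def sgMap (i : Fin 3) (t : ℝ × ℝ) : ℝ × ℝ := (1/2 : ℝ) • (t + sgPt i)

/-!
Every barycentric coordinate is nonnegative on `Δ`: at a point of `Δ` where it is minimal, say
`u_i t`, it equals the average of its values at `t` and at `x_i`. So `Δ` lies in the triangle, and
two distinct pieces `u_i(Δ)`, `u_j(Δ)` meet only in `u_i(x_j) = u_j(x_i)`. Consequently, for `g`
agreeing with `f` at the vertices, `u_i t ↦ f(u_i t) + α_i (g t - b t)` is well defined (both pieces
give `f` at a junction), continuous (`⊔ᵢ Δ → Δ` is a quotient map) and again agrees with `f` at the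
vertices. This is a contraction with constant `‖α‖_∞` of a closed subset of `C(Δ, ℝ)`, whose fixed
points are exactly the solutions; every solution lies in that subset since `α_i ≠ 1`.
-/

open Function Topology

theorem eq_single_of_one_le_of_sum_eq_one {ι R : Type*} [Fintype ι] [DecidableEq ι] [Field R]
    [LinearOrder R] [IsStrictOrderedRing R] {w : ι → R} (h0 : ∀ k, 0 ≤ w k)
    (h1 : ∑ k, w k = 1) {j : ι} (hj : 1 ≤ w j) : w = Pi.single j 1 := by
  funext k
  rcases eq_or_ne k j with rfl | hkj
  · have := Finset.single_le_sum (fun k _ => h0 k) (Finset.mem_univ k)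
    simp only [Pi.single_eq_same]
    linarith
  · have := Finset.sum_le_sum_of_subset_of_nonneg (Finset.subset_univ {j, k})
      (fun k _ _ => h0 k)
    rw [Finset.sum_pair hkj.symm] at this
    simp only [Pi.single_eq_of_ne hkj]
    linarith [h0 k]

theorem IsCompact.le_of_forall_midpoint_le {X ι : Type*} [TopologicalSpace X] {K : Set X}
    (hK : IsCompact K) {ψ : X → ℝ} (hψ : ContinuousOn ψ K) {w : ι → X → X}
    (hcover : K ⊆ ⋃ i, w i '' K) {c : ℝ} (hw : ∀ i, ∀ t ∈ K, (ψ t + c) / 2 ≤ ψ (w i t)) :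
    ∀ p ∈ K, c ≤ ψ p := by
  rcases K.eq_empty_or_nonempty with rfl | hne
  · simp
  obtain ⟨p₀, hp₀, hmin⟩ := hK.exists_isMinOn hne hψ
  obtain ⟨i, t, ht, rfl⟩ : ∃ i, ∃ t ∈ K, w i t = p₀ := by simpa using hcover hp₀
  have hmid := hw i t ht
  have hle := isMinOn_iff.1 hmin t ht
  intro p hp
  linarith [isMinOn_iff.1 hmin p hp]

structure IsFinitelyRamified {ι X : Type*} [TopologicalSpace X] (U : ι → X → X) (v : ι → X) :
    Prop where
  continuous : ∀ i, Continuous (U i)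
  exists_eq : ∀ x, ∃ i t, U i t = x
  map_vertex : ∀ i, U i (v i) = v i
  eq_of_map_eq : ∀ {i j t s}, U i t = U j s → i = j ∧ t = s ∨ t = v j ∧ s = v i

def vertexInterpolants {ι X : Type*} [TopologicalSpace X] (v : ι → X) (f : C(X, ℝ)) :
    Set C(X, ℝ) :=
  {g | ∀ i, g (v i) = f (v i)}

theorem isClosed_vertexInterpolants {ι X : Type*} [TopologicalSpace X] (v : ι → X)
    (f : C(X, ℝ)) : IsClosed (vertexInterpolants v f) := by
  simp only [vertexInterpolants, Set.ofPred_forall]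
  exact isClosed_iInter fun i => isClosed_eq (continuous_eval_const _) continuous_const

namespace IsFinitelyRamified

variable {ι X : Type*} [TopologicalSpace X] {U : ι → X → X} {v : ι → X} {f b : C(X, ℝ)}

theorem mem_vertexInterpolants_of_forall_eq (hU : IsFinitelyRamified U v)
    (hfb : ∀ i, b (v i) = f (v i)) {a : ι → ℝ} (ha : ∀ i, a i ≠ 1) {g : C(X, ℝ)}
    (hg : ∀ i t, g (U i t) = f (U i t) + a i * (g t - b t)) : g ∈ vertexInterpolants v f := by
  intro i
  have h := hg i (v i)
  rw [hU.map_vertex, hfb] at h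
  have : (1 - a i) * (g (v i) - f (v i)) = 0 := by linarith
  simpa [sub_eq_zero, (ha i).symm] using this

def sigmaMap (hU : IsFinitelyRamified U v) : C(Σ _ : ι, X, X) :=
  ⟨fun p => U p.1 p.2, continuous_sigma hU.continuous⟩

def fractalPieces (hU : IsFinitelyRamified U v) (f b : C(X, ℝ)) (a : ι → ℝ) (g : C(X, ℝ)) :
    C(Σ _ : ι, X, ℝ) :=
  ⟨fun p => f (U p.1 p.2) + a p.1 * (g p.2 - b p.2), continuous_sigma fun i => by
    dsimp only
    have := hU.continuous i
    fun_prop⟩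

theorem factorsThrough_fractalPieces (hU : IsFinitelyRamified U v)
    (hfb : ∀ i, b (v i) = f (v i)) (a : ι → ℝ) {g : C(X, ℝ)} (hg : g ∈ vertexInterpolants v f) :
    FactorsThrough (hU.fractalPieces f b a g) hU.sigmaMap := by
  rintro ⟨i, t⟩ ⟨j, s⟩ (h : U i t = U j s)
  rcases hU.eq_of_map_eq h with ⟨rfl, rfl⟩ | ⟨rfl, rfl⟩
  · rfl
  · simp [fractalPieces, hg _, hfb, h]

variable [Fintype ι] [CompactSpace X] [T2Space X]

theorem isQuotientMap_sigmaMap (hU : IsFinitelyRamified U v) : IsQuotientMap hU.sigmaMap :=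
  .of_surjective_continuous (fun x => let ⟨i, t, h⟩ := hU.exists_eq x; ⟨⟨i, t⟩, h⟩)
    hU.sigmaMap.continuous

def fractalMap (hU : IsFinitelyRamified U v) (hfb : ∀ i, b (v i) = f (v i))
    (a : ι → ℝ) (g : vertexInterpolants v f) : C(X, ℝ) :=
  hU.isQuotientMap_sigmaMap.lift _ (hU.factorsThrough_fractalPieces hfb a g.2)

theorem fractalMap_apply_map (hU : IsFinitelyRamified U v) (hfb : ∀ i, b (v i) = f (v i))
    (a : ι → ℝ) (g : vertexInterpolants v f) (i : ι) (t : X) :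
    hU.fractalMap hfb a g (U i t) = f (U i t) + a i * (g.1 t - b t) :=
  DFunLike.congr_fun
    (hU.isQuotientMap_sigmaMap.lift_comp _ (hU.factorsThrough_fractalPieces hfb a g.2)) ⟨i, t⟩

theorem fractalMap_mem (hU : IsFinitelyRamified U v) (hfb : ∀ i, b (v i) = f (v i))
    (a : ι → ℝ) (g : vertexInterpolants v f) : hU.fractalMap hfb a g ∈ vertexInterpolants v f := by
  intro i
  rw [← hU.map_vertex i, fractalMap_apply_map, hU.map_vertex, g.2 i, hfb]
  ring

def fractalOp (hU : IsFinitelyRamified U v) (hfb : ∀ i, b (v i) = f (v i))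
    (a : ι → ℝ) (g : vertexInterpolants v f) : vertexInterpolants v f :=
  ⟨hU.fractalMap hfb a g, hU.fractalMap_mem hfb a g⟩

theorem lipschitzWith_fractalOp (hU : IsFinitelyRamified U v) (hfb : ∀ i, b (v i) = f (v i))
    (a : ι → ℝ) : LipschitzWith ‖a‖₊ (hU.fractalOp hfb a) := by
  refine LipschitzWith.of_dist_le_mul fun g g' => ?_
  rw [Subtype.dist_eq, ContinuousMap.dist_le (by positivity)]
  intro x
  obtain ⟨i, t, rfl⟩ := hU.exists_eq x
  calc dist (hU.fractalMap hfb a g (U i t)) (hU.fractalMap hfb a g' (U i t))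
      = |a i| * dist (g.1 t) (g'.1 t) := by
        rw [fractalMap_apply_map, fractalMap_apply_map, Real.dist_eq, Real.dist_eq, ← abs_mul]
        ring_nf
    _ ≤ ‖a‖ * dist g g' :=
        mul_le_mul (norm_le_pi_norm a i) (g.1.dist_apply_le_dist t) dist_nonneg (norm_nonneg a)

theorem isFixedPt_fractalOp_iff (hU : IsFinitelyRamified U v) (hfb : ∀ i, b (v i) = f (v i))
    (a : ι → ℝ) (g : vertexInterpolants v f) :
    IsFixedPt (hU.fractalOp hfb a) g ↔ ∀ i t, g.1 (U i t) = f (U i t) + a i * (g.1 t - b t) := by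
  refine ⟨fun h i t => ?_, fun h => Subtype.ext <| ContinuousMap.ext fun x => ?_⟩
  · calc g.1 (U i t) = (hU.fractalOp hfb a g).1 (U i t) := by rw [h]
      _ = _ := fractalMap_apply_map hU hfb a g i t
  · obtain ⟨i, t, rfl⟩ := hU.exists_eq x
    exact (fractalMap_apply_map hU hfb a g i t).trans (h i t).symm

theorem existsUnique_fractal (hU : IsFinitelyRamified U v) (hfb : ∀ i, b (v i) = f (v i))
    {a : ι → ℝ} (ha : ‖a‖ < 1) :
    ∃! g : C(X, ℝ), ∀ i t, g (U i t) = f (U i t) + a i * (g t - b t) := by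
  have : CompleteSpace (vertexInterpolants v f) :=
    (isClosed_vertexInterpolants v f).completeSpace_coe
  have : Nonempty (vertexInterpolants v f) := ⟨⟨f, fun _ => rfl⟩⟩
  have hT : ContractingWith ‖a‖₊ (hU.fractalOp hfb a) :=
    ⟨by exact_mod_cast ha, hU.lipschitzWith_fractalOp hfb a⟩
  have ha1 : ∀ i, a i ≠ 1 := fun i h => by
    have := norm_le_pi_norm a i
    rw [h, norm_one] at this
    linarith
  refine ⟨_, (hU.isFixedPt_fractalOp_iff hfb a _).1 hT.fixedPoint_isFixedPt, fun g hg => ?_⟩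
  have hgS := hU.mem_vertexInterpolants_of_forall_eq hfb ha1 hg
  exact congrArg Subtype.val
    (hT.fixedPoint_unique ((hU.isFixedPt_fractalOp_iff hfb a ⟨g, hgS⟩).2 hg))

end IsFinitelyRamified

def sgBary (p : ℝ × ℝ) : Fin 3 → ℝ :=
  ![1 - p.1 - p.2 / √3, p.1 - p.2 / √3, 2 * p.2 / √3]

theorem continuous_sgBary : Continuous sgBary :=
  continuous_pi fun k => by fin_cases k <;> simp [sgBary] <;> fun_prop

theorem sgBary_sgMap (i : Fin 3) (t : ℝ × ℝ) :
    sgBary (sgMap i t) = (1 / 2 : ℝ) • (sgBary t + Pi.single i 1) := by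
  have : √3 ≠ 0 := by positivity
  funext k
  simp only [Pi.smul_apply, Pi.add_apply, Pi.single_apply, smul_eq_mul]
  fin_cases i <;> fin_cases k <;> simp [sgBary, sgMap, sgPt] <;> field_simp <;> ring

theorem sum_sgBary (p : ℝ × ℝ) : ∑ k, sgBary p k = 1 := by
  simp [sgBary, Fin.sum_univ_three]
  ring

theorem sgBary_injective : Injective sgBary := by
  intro p q h
  have h2 := congrFun h 2
  have h1 := congrFun h 1
  simp [sgBary] at h1 h2
  ext <;> simp_all

theorem sgMap_sgPt (i : Fin 3) : sgMap i (sgPt i) = sgPt i := by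
  rw [sgMap, ← two_smul ℝ (sgPt i), smul_smul]
  norm_num

theorem sgBary_sgPt (i : Fin 3) : sgBary (sgPt i) = Pi.single i 1 := by
  have h := sgBary_sgMap i (sgPt i)
  rw [sgMap_sgPt] at h
  funext k
  have := congrFun h k
  simp only [Pi.smul_apply, Pi.add_apply, smul_eq_mul] at this
  linarith

theorem sgMap_injective (i : Fin 3) : Injective (sgMap i) :=
  (smul_right_injective _ (by norm_num)).comp (add_left_injective _)

theorem sgBary_nonneg {Δ : Set (ℝ × ℝ)} (hK : IsCompact Δ) (hΔ : Δ ⊆ ⋃ i, sgMap i '' Δ)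
    {p : ℝ × ℝ} (hp : p ∈ Δ) (k : Fin 3) : 0 ≤ sgBary p k := by
  refine hK.le_of_forall_midpoint_le (ψ := fun p => sgBary p k)
    (continuous_apply k |>.comp continuous_sgBary).continuousOn hΔ (fun i t _ => ?_) p hp
  rw [sgBary_sgMap]
  have : 0 ≤ (Pi.single i 1 : Fin 3 → ℝ) k := by rw [Pi.single_apply]; split_ifs <;> norm_num
  simp only [Pi.smul_apply, Pi.add_apply, smul_eq_mul]
  linarith

theorem eq_sgPt_of_one_le_sgBary {Δ : Set (ℝ × ℝ)} (hK : IsCompact Δ) (hΔ : Δ ⊆ ⋃ i, sgMap i '' Δ)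
    {p : ℝ × ℝ} (hp : p ∈ Δ) {j : Fin 3} (h : 1 ≤ sgBary p j) :
    p = sgPt j :=
  sgBary_injective <| by
    rw [sgBary_sgPt]
    exact eq_single_of_one_le_of_sum_eq_one (sgBary_nonneg hK hΔ hp) (sum_sgBary p) h

theorem sgMap_eq_sgMap {Δ : Set (ℝ × ℝ)} (hK : IsCompact Δ) (hΔ : Δ ⊆ ⋃ i, sgMap i '' Δ)
    {i j : Fin 3} (hij : i ≠ j) {t s : ℝ × ℝ} (ht : t ∈ Δ) (hs : s ∈ Δ)
    (h : sgMap i t = sgMap j s) : t = sgPt j ∧ s = sgPt i := by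
  have hbary : sgBary t + Pi.single i 1 = sgBary s + Pi.single j 1 := by
    have := congrArg sgBary h
    rw [sgBary_sgMap, sgBary_sgMap] at this
    exact smul_right_injective _ (by norm_num) this
  have hj := congrFun hbary j
  have hi := congrFun hbary i
  simp [hij, hij.symm] at hi hj
  exact ⟨eq_sgPt_of_one_le_sgBary hK hΔ ht (by linarith [sgBary_nonneg hK hΔ hs j]),
    eq_sgPt_of_one_le_sgBary hK hΔ hs (by linarith [sgBary_nonneg hK hΔ ht i])⟩

theorem isFinitelyRamified_sgMap {Δ : Set (ℝ × ℝ)} [CompactSpace Δ]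
    (hΔ : Δ = ⋃ i : Fin 3, sgMap i '' Δ) (hmaps : ∀ i : Fin 3, Set.MapsTo (sgMap i) Δ Δ)
    (hx : ∀ i : Fin 3, sgPt i ∈ Δ) :
    IsFinitelyRamified (fun i (t : Δ) => (⟨sgMap i t, hmaps i t.2⟩ : Δ))
      (fun i => ⟨sgPt i, hx i⟩) where
  continuous i := (by unfold sgMap; fun_prop : Continuous (sgMap i)).comp continuous_subtype_val
    |>.subtype_mk _
  exists_eq x := by
    have hx : (x : ℝ × ℝ) ∈ ⋃ i, sgMap i '' Δ := hΔ ▸ x.2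
    obtain ⟨i, t, ht, hti⟩ : ∃ i, ∃ t ∈ Δ, sgMap i t = x := by simpa using hx
    exact ⟨i, ⟨t, ht⟩, Subtype.ext hti⟩
  map_vertex i := Subtype.ext (sgMap_sgPt i)
  eq_of_map_eq {i j t s} h := by
    have h' : sgMap i t = sgMap j s := congrArg Subtype.val h
    by_cases hij : i = j
    · subst hij
      exact .inl ⟨rfl, Subtype.ext (sgMap_injective i h')⟩
    · have hK : IsCompact Δ := isCompact_iff_compactSpace.2 ‹_›
      obtain ⟨hts, hst⟩ := sgMap_eq_sgMap hK hΔ.subset hij t.2 s.2 h'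
      exact .inr ⟨Subtype.ext hts, Subtype.ext hst⟩

theorem sg_alpha_fractal_existsUnique_general
    (Δ : Set (ℝ × ℝ)) [CompactSpace Δ]
    (hΔ : Δ = ⋃ i : Fin 3, sgMap i '' Δ)
    (hmaps : ∀ i : Fin 3, Set.MapsTo (sgMap i) Δ Δ)
    (hx : ∀ i : Fin 3, sgPt i ∈ Δ)
    (f b : C(Δ, ℝ))
    (hfb : ∀ i : Fin 3, b ⟨sgPt i, hx i⟩ = f ⟨sgPt i, hx i⟩)
    (a : Fin 3 → ℝ) (ha : ‖a‖ < 1) :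
    ∃! fα : C(Δ, ℝ), ∀ (i : Fin 3) (t : Δ),
      fα ⟨sgMap i ↑t, hmaps i t.2⟩ = f ⟨sgMap i ↑t, hmaps i t.2⟩ + a i * (fα t - b t) :=
  (isFinitelyRamified_sgMap hΔ hmaps hx).existsUnique_fractal hfb ha

/-- There exists a unique continuous `f^α : Δ → ℝ` satisfying
`f^α(u_i(t)) = f(u_i(t)) + α_i (f^α(t) - b(t))` for all `t ∈ Δ` and `i ∈ {1,2,3}`. -/
theorem sg_alpha_fractal_existsUnique
    (Δ : Set (ℝ × ℝ)) [CompactSpace Δ] (hne : Δ.Nonempty)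
    (hΔ : Δ = ⋃ i : Fin 3, sgMap i '' Δ)
    (hmaps : ∀ i : Fin 3, Set.MapsTo (sgMap i) Δ Δ)
    (hx : ∀ i : Fin 3, sgPt i ∈ Δ)
    (f b : C(Δ, ℝ))
    (hfb : ∀ i : Fin 3, b ⟨sgPt i, hx i⟩ = f ⟨sgPt i, hx i⟩)
    (a : Fin 3 → ℝ) (ha : ‖a‖ < 1) :
    ∃! fα : C(Δ, ℝ), ∀ (i : Fin 3) (t : Δ),
      fα ⟨sgMap i ↑t, hmaps i t.2⟩ = f ⟨sgMap i ↑t, hmaps i t.2⟩ + a i * (fα t - b t) :=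
  sg_alpha_fractal_existsUnique_general Δ hΔ hmaps hx f b hfb a ha
end
end

section
/- Fix 0 ≤ r < 1 and let α, β ∈ ℝ³ be scale vectors with |α|_∞ ≤ r and |β|_∞ ≤ r. Let f_b^α and f_b^β be continuous functions on Δ satisfying the functional equations f_b^α(u_i(t)) = f(u_i(t)) + α_i·(f_b^α(t) − b(t)) and f_b^β(u_i(t)) = f(u_i(t)) + β_i·(f_b^β(t) − b(t)) for all t ∈ Δ and i ∈ {1,2,3}. Then ‖f_b^α − f_b^β‖_∞ ≤ (|α − β|_∞ / (1 − r)) · (‖f_b^α‖_∞ + ‖b‖_∞). -/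
noncomputable section

/-- Uniform bound: if `|α|_∞ ≤ r` and `|β|_∞ ≤ r` with `0 ≤ r < 1`, then
`‖f_b^α - f_b^β‖_∞ ≤ (|α - β|_∞ / (1 - r)) (‖f_b^α‖_∞ + ‖b‖_∞)`. -/
theorem sg_alpha_beta_uniform_bound
    (Δ : Set (ℝ × ℝ)) [CompactSpace Δ] (hne : Δ.Nonempty)
    (hΔ : Δ = ⋃ i : Fin 3, sgMap i '' Δ)
    (hmaps : ∀ i : Fin 3, Set.MapsTo (sgMap i) Δ Δ)
    (hx : ∀ i : Fin 3, sgPt i ∈ Δ)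
    (f b : C(Δ, ℝ))
    (hfb : ∀ i : Fin 3, b ⟨sgPt i, hx i⟩ = f ⟨sgPt i, hx i⟩)
    (r : ℝ) (hr0 : 0 ≤ r) (hr1 : r < 1)
    (a β : Fin 3 → ℝ) (ha : ‖a‖ ≤ r) (hβ : ‖β‖ ≤ r)
    (fa fβ : C(Δ, ℝ))
    (hfa : ∀ (i : Fin 3) (t : Δ),
      fa ⟨sgMap i ↑t, hmaps i t.2⟩ = f ⟨sgMap i ↑t, hmaps i t.2⟩ + a i * (fa t - b t))
    (hfβ : ∀ (i : Fin 3) (t : Δ),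
      fβ ⟨sgMap i ↑t, hmaps i t.2⟩ = f ⟨sgMap i ↑t, hmaps i t.2⟩ + β i * (fβ t - b t)) :
    ‖fa - fβ‖ ≤ (‖a - β‖ / (1 - r)) * (‖fa‖ + ‖b‖) := by

  set M := ‖fa - fβ‖ with hM
  have key : M ≤ ‖a - β‖ * (‖fa‖ + ‖b‖) + r * M := by
    rw [hM]
    rw [ContinuousMap.norm_le _ (by positivity)]
    intro p
    obtain ⟨i, t, ht, hpt⟩ : ∃ i : Fin 3, ∃ t ∈ Δ, sgMap i t = (p : ℝ × ℝ) := by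
      have h : (p : ℝ × ℝ) ∈ ⋃ i : Fin 3, sgMap i '' Δ := by rw [← hΔ]; exact p.2
      simpa using h
    have hp : p = ⟨sgMap i (⟨t, ht⟩ : Δ), hmaps i ht⟩ := by
      exact Subtype.ext hpt.symm
    have e1 := hfa i ⟨t, ht⟩
    have e2 := hfβ i ⟨t, ht⟩
    have hval : (fa - fβ) p = (a i - β i) * (fa ⟨t, ht⟩ - b ⟨t, ht⟩)
        + β i * (fa ⟨t, ht⟩ - fβ ⟨t, ht⟩) := by
      rw [hp]
      simp only [ContinuousMap.sub_apply, e1, e2]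
      ring
    have h1 : |a i - β i| ≤ ‖a - β‖ := by
      simpa using norm_le_pi_norm (a - β) i
    have h2 : |β i| ≤ r := le_trans (by simpa using norm_le_pi_norm β i) hβ
    have h3 : |fa ⟨t, ht⟩| ≤ ‖fa‖ := fa.norm_coe_le_norm _
    have h4 : |b ⟨t, ht⟩| ≤ ‖b‖ := b.norm_coe_le_norm _
    have h5 : |fa ⟨t, ht⟩ - fβ ⟨t, ht⟩| ≤ ‖fa - fβ‖ := by
      simpa using (fa - fβ).norm_coe_le_norm ⟨t, ht⟩
    calc ‖(fa - fβ) p‖ = |(a i - β i) * (fa ⟨t, ht⟩ - b ⟨t, ht⟩)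
          + β i * (fa ⟨t, ht⟩ - fβ ⟨t, ht⟩)| := by rw [hval]; rfl
      _ ≤ |a i - β i| * |fa ⟨t, ht⟩ - b ⟨t, ht⟩| + |β i| * |fa ⟨t, ht⟩ - fβ ⟨t, ht⟩| := by
          refine le_trans (abs_add_le _ _) ?_
          rw [abs_mul, abs_mul]
      _ ≤ ‖a - β‖ * (‖fa‖ + ‖b‖) + r * ‖fa - fβ‖ := by
          have : |fa ⟨t, ht⟩ - b ⟨t, ht⟩| ≤ ‖fa‖ + ‖b‖ :=
            le_trans (abs_sub _ _) (by linarith)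
          have hab : (0:ℝ) ≤ |a i - β i| := abs_nonneg _
          gcongr <;> positivity
  have hD : 0 ≤ ‖a - β‖ * (‖fa‖ + ‖b‖) := by positivity
  rw [div_mul_eq_mul_div, le_div_iff₀ (by linarith)]
  nlinarith [norm_nonneg (fa - fβ)]
end
end

section
/- Fix 0 ≤ r < 1 and set S = {α ∈ ℝ³ : |α|_∞ ≤ r}. For each α ∈ S let W(α) = f_b^α ∈ C(Δ, ℝ) be the unique continuous function satisfying f_b^α(u_i(t)) = f(u_i(t)) + α_i·(f_b^α(t) − b(t)) for all t ∈ Δ and i ∈ {1,2,3}. Then the map W : S → C(Δ, ℝ) is continuous, where S carries the metric induced by |·|_∞ on ℝ³ and C(Δ, ℝ) carries the uniform norm topology. -/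
noncomputable section

/-- The map `W : S → C(Δ, ℝ)`, `W(α) = f_b^α`, is continuous on
`S = {α : |α|_∞ ≤ r}` (with the sup metric on `ℝ³` and the uniform norm on `C(Δ, ℝ)`). -/
theorem sg_continuous_dependence_on_alpha
    (Δ : Set (ℝ × ℝ)) [CompactSpace Δ] (hne : Δ.Nonempty)
    (hΔ : Δ = ⋃ i : Fin 3, sgMap i '' Δ)
    (hmaps : ∀ i : Fin 3, Set.MapsTo (sgMap i) Δ Δ)
    (hx : ∀ i : Fin 3, sgPt i ∈ Δ)
    (f b : C(Δ, ℝ))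
    (hfb : ∀ i : Fin 3, b ⟨sgPt i, hx i⟩ = f ⟨sgPt i, hx i⟩)
    (r : ℝ) (hr0 : 0 ≤ r) (hr1 : r < 1)
    (W : (Fin 3 → ℝ) → C(Δ, ℝ))
    (hW : ∀ a : Fin 3 → ℝ, ‖a‖ ≤ r → ∀ (i : Fin 3) (t : Δ),
      W a ⟨sgMap i ↑t, hmaps i t.2⟩ =
        f ⟨sgMap i ↑t, hmaps i t.2⟩ + a i * (W a t - b t)) :
    ContinuousOn W {a : Fin 3 → ℝ | ‖a‖ ≤ r} := by
  have h1r : (0:ℝ) < 1 - r := by linarith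
  -- Every point of Δ has the form sgMap i t
  have key : ∀ p : Δ, ∃ (i : Fin 3) (t : Δ), p = ⟨sgMap i ↑t, hmaps i t.2⟩ := by
    intro p
    have hp : (p : ℝ × ℝ) ∈ ⋃ i : Fin 3, sgMap i '' Δ := hΔ ▸ p.2
    rcases Set.mem_iUnion.mp hp with ⟨i, hi⟩
    rcases hi with ⟨t, ht, hEq⟩
    exact ⟨i, ⟨t, ht⟩, Subtype.ext hEq.symm⟩
  set M : ℝ := (‖f‖ + r * ‖b‖) / (1 - r) with hMdef
  have hMnn : 0 ≤ M := by
    apply div_nonneg _ (le_of_lt h1r)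
    positivity
  -- Uniform bound on ‖W a‖
  have hbound : ∀ a : Fin 3 → ℝ, ‖a‖ ≤ r → ‖W a‖ ≤ M := by
    intro a ha
    rw [hMdef, le_div_iff₀ h1r]
    have step : ‖W a‖ ≤ ‖f‖ + r * (‖W a‖ + ‖b‖) := by
      apply (ContinuousMap.norm_le _ (by positivity)).mpr
      intro p
      obtain ⟨i, t, rfl⟩ := key p
      rw [hW a ha i t]
      have h1 : ‖f ⟨sgMap i ↑t, hmaps i t.2⟩‖ ≤ ‖f‖ := ContinuousMap.norm_coe_le_norm f _
      have h2 : ‖a i‖ ≤ r := le_trans (norm_le_pi_norm a i) ha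
      have h3 : ‖W a t - b t‖ ≤ ‖W a‖ + ‖b‖ := by
        calc ‖W a t - b t‖ ≤ ‖W a t‖ + ‖b t‖ := norm_sub_le _ _
          _ ≤ ‖W a‖ + ‖b‖ := add_le_add (ContinuousMap.norm_coe_le_norm _ _)
              (ContinuousMap.norm_coe_le_norm _ _)
      calc ‖f ⟨sgMap i ↑t, hmaps i t.2⟩ + a i * (W a t - b t)‖
          ≤ ‖f ⟨sgMap i ↑t, hmaps i t.2⟩‖ + ‖a i * (W a t - b t)‖ := norm_add_le _ _
        _ = ‖f ⟨sgMap i ↑t, hmaps i t.2⟩‖ + ‖a i‖ * ‖W a t - b t‖ := by rw [norm_mul]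
        _ ≤ ‖f‖ + r * (‖W a‖ + ‖b‖) := add_le_add h1
            (mul_le_mul h2 h3 (norm_nonneg _) hr0)
    nlinarith [norm_nonneg (W a)]
  -- Lipschitz estimate
  set L : ℝ := (M + ‖b‖) / (1 - r) with hLdef
  have hLnn : (0:ℝ) ≤ L := by
    apply div_nonneg _ (le_of_lt h1r); positivity
  have hLip : ∀ a a' : Fin 3 → ℝ, ‖a‖ ≤ r → ‖a'‖ ≤ r →
      ‖W a - W a'‖ ≤ L * ‖a - a'‖ := by
    intro a a' ha ha'
    rw [hLdef, div_mul_eq_mul_div, le_div_iff₀ h1r]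
    have step : ‖W a - W a'‖ ≤ (M + ‖b‖) * ‖a - a'‖ + r * ‖W a - W a'‖ := by
      apply (ContinuousMap.norm_le _ (by positivity)).mpr
      intro p
      obtain ⟨i, t, rfl⟩ := key p
      have e : (W a - W a') ⟨sgMap i ↑t, hmaps i t.2⟩ =
          (a i - a' i) * (W a t - b t) + a' i * ((W a - W a') t) := by
        simp only [ContinuousMap.sub_apply, hW a ha i t, hW a' ha' i t]
        ring
      rw [e]
      have h1 : ‖a i - a' i‖ ≤ ‖a - a'‖ := by
        have := norm_le_pi_norm (a - a') i
        simpa using this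
      have h2 : ‖W a t - b t‖ ≤ M + ‖b‖ := by
        calc ‖W a t - b t‖ ≤ ‖W a t‖ + ‖b t‖ := norm_sub_le _ _
          _ ≤ ‖W a‖ + ‖b‖ := add_le_add (ContinuousMap.norm_coe_le_norm _ _)
              (ContinuousMap.norm_coe_le_norm _ _)
          _ ≤ M + ‖b‖ := by linarith [hbound a ha]
      have h3 : ‖a' i‖ ≤ r := le_trans (norm_le_pi_norm a' i) ha'
      have h4 : ‖(W a - W a') t‖ ≤ ‖W a - W a'‖ := ContinuousMap.norm_coe_le_norm _ _
      calc ‖(a i - a' i) * (W a t - b t) + a' i * ((W a - W a') t)‖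
          ≤ ‖(a i - a' i) * (W a t - b t)‖ + ‖a' i * ((W a - W a') t)‖ := norm_add_le _ _
        _ = ‖a i - a' i‖ * ‖W a t - b t‖ + ‖a' i‖ * ‖(W a - W a') t‖ := by
            rw [norm_mul, norm_mul]
        _ ≤ ‖a - a'‖ * (M + ‖b‖) + r * ‖W a - W a'‖ :=
            add_le_add (mul_le_mul h1 h2 (norm_nonneg _) (norm_nonneg _))
              (mul_le_mul h3 h4 (norm_nonneg _) hr0)
        _ = (M + ‖b‖) * ‖a - a'‖ + r * ‖W a - W a'‖ := by ring
    nlinarith [norm_nonneg (W a - W a')]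
  have hlw : LipschitzOnWith (Real.toNNReal L) W {a : Fin 3 → ℝ | ‖a‖ ≤ r} := by
    apply LipschitzOnWith.of_dist_le_mul
    intro x hx' y hy'
    rw [dist_eq_norm, dist_eq_norm, Real.coe_toNNReal L hLnn]
    exact hLip x y hx' hy'
  exact hlw.continuousOn
end
end

section
/- Let α ∈ ℝ³ be a scale vector with |α|_∞ < 1, let b, c : Δ → ℝ be continuous with b = f = c on V₀, and let f_b^α and f_c^α be continuous functions on Δ satisfying f_b^α(u_i(t)) = f(u_i(t)) + α_i·(f_b^α(t) − b(t)) and f_c^α(u_i(t)) = f(u_i(t)) + α_i·(f_c^α(t) − c(t)) for all t ∈ Δ and i ∈ {1,2,3}. Then for every s ∈ Δ, |f_b^α(s) − f_c^α(s)| ≤ |α|_∞·‖f_b^α − f_c^α‖_∞ + |α|_∞·‖c − b‖_∞. -/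
noncomputable section

/-- Pointwise bound for α-fractal functions with different base
functions: `|f_b^α(s) - f_c^α(s)| ≤ |α|_∞ ‖f_b^α - f_c^α‖_∞ + |α|_∞ ‖c - b‖_∞`. -/
theorem sg_base_pointwise_bound
    (Δ : Set (ℝ × ℝ)) [CompactSpace Δ] (hne : Δ.Nonempty)
    (hΔ : Δ = ⋃ i : Fin 3, sgMap i '' Δ)
    (hmaps : ∀ i : Fin 3, Set.MapsTo (sgMap i) Δ Δ)
    (hx : ∀ i : Fin 3, sgPt i ∈ Δ)
    (f : C(Δ, ℝ))
    (a : Fin 3 → ℝ) (ha : ‖a‖ < 1)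
    (b c : C(Δ, ℝ))
    (hb : ∀ i : Fin 3, b ⟨sgPt i, hx i⟩ = f ⟨sgPt i, hx i⟩)
    (hc : ∀ i : Fin 3, c ⟨sgPt i, hx i⟩ = f ⟨sgPt i, hx i⟩)
    (fb fc : C(Δ, ℝ))
    (hfb : ∀ (i : Fin 3) (t : Δ),
      fb ⟨sgMap i ↑t, hmaps i t.2⟩ = f ⟨sgMap i ↑t, hmaps i t.2⟩ + a i * (fb t - b t))
    (hfc : ∀ (i : Fin 3) (t : Δ),
      fc ⟨sgMap i ↑t, hmaps i t.2⟩ = f ⟨sgMap i ↑t, hmaps i t.2⟩ + a i * (fc t - c t)) :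
    ∀ s : Δ, |fb s - fc s| ≤ ‖a‖ * ‖fb - fc‖ + ‖a‖ * ‖c - b‖ := by
  intro s
  have hs : (s : ℝ × ℝ) ∈ ⋃ i : Fin 3, sgMap i '' Δ := hΔ ▸ s.2
  obtain ⟨i, t, ht, hst⟩ := Set.mem_iUnion.mp hs
  set tt : Δ := ⟨t, ht⟩
  have hseq : s = ⟨sgMap i tt, hmaps i tt.2⟩ := Subtype.ext hst.symm
  have h1 := hfb i tt
  have h2 := hfc i tt
  have key : fb s - fc s = a i * ((fb tt - fc tt) + (c tt - b tt)) := by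
    rw [hseq, h1, h2]; ring
  rw [key, abs_mul]
  have hai : |a i| ≤ ‖a‖ := by
    simpa using norm_le_pi_norm a i
  have h3 : |(fb tt - fc tt) + (c tt - b tt)| ≤ ‖fb - fc‖ + ‖c - b‖ := by
    refine (abs_add_le _ _).trans (add_le_add ?_ ?_)
    · simpa using (fb - fc).norm_coe_le_norm tt
    · simpa using (c - b).norm_coe_le_norm tt
  calc |a i| * |(fb tt - fc tt) + (c tt - b tt)|
      ≤ ‖a‖ * (‖fb - fc‖ + ‖c - b‖) :=
        mul_le_mul hai h3 (abs_nonneg _) (norm_nonneg _)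
    _ = ‖a‖ * ‖fb - fc‖ + ‖a‖ * ‖c - b‖ := by ring
end
end

section
/- Let α ∈ ℝ³ be a scale vector with |α|_∞ < 1, and let X_f = {b ∈ C(Δ, ℝ) : b = f on V₀}. For each b ∈ X_f let T(b) = f_b^α be the unique continuous function satisfying f_b^α(u_i(t)) = f(u_i(t)) + α_i·(f_b^α(t) − b(t)) for all t ∈ Δ and i ∈ {1,2,3}. Then T : X_f → C(Δ, ℝ) is Lipschitz continuous with Lipschitz constant |α|_∞/(1 − |α|_∞); that is, for all b, c ∈ X_f, ‖T(b) − T(c)‖_∞ ≤ (|α|_∞/(1 − |α|_∞))·‖b − c‖_∞. -/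
noncomputable section

/-- The map `T : X_f → C(Δ, ℝ)`, `T(b) = f_b^α`, is Lipschitz
continuous with Lipschitz constant `|α|_∞ / (1 - |α|_∞)`. -/
theorem sg_lipschitz_dependence_on_base
    (Δ : Set (ℝ × ℝ)) [CompactSpace Δ] (hne : Δ.Nonempty)
    (hΔ : Δ = ⋃ i : Fin 3, sgMap i '' Δ)
    (hmaps : ∀ i : Fin 3, Set.MapsTo (sgMap i) Δ Δ)
    (hx : ∀ i : Fin 3, sgPt i ∈ Δ)
    (f : C(Δ, ℝ))
    (a : Fin 3 → ℝ) (ha : ‖a‖ < 1)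
    (T : C(Δ, ℝ) → C(Δ, ℝ))
    (hT : ∀ b : C(Δ, ℝ), (∀ i : Fin 3, b ⟨sgPt i, hx i⟩ = f ⟨sgPt i, hx i⟩) →
      ∀ (i : Fin 3) (t : Δ),
        T b ⟨sgMap i ↑t, hmaps i t.2⟩ =
          f ⟨sgMap i ↑t, hmaps i t.2⟩ + a i * (T b t - b t)) :
    ∀ b c : C(Δ, ℝ),
      (∀ i : Fin 3, b ⟨sgPt i, hx i⟩ = f ⟨sgPt i, hx i⟩) →
      (∀ i : Fin 3, c ⟨sgPt i, hx i⟩ = f ⟨sgPt i, hx i⟩) →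
      ‖T b - T c‖ ≤ (‖a‖ / (1 - ‖a‖)) * ‖b - c‖ := by

  intro b c hb hc
  have h0 : (0:ℝ) ≤ ‖a‖ := norm_nonneg a
  have h1 : (0:ℝ) < 1 - ‖a‖ := by linarith
  set M := ‖T b - T c‖ with hM
  set N := ‖b - c‖ with hN
  have hM0 : (0:ℝ) ≤ M := norm_nonneg _
  have hN0 : (0:ℝ) ≤ N := norm_nonneg _
  have key : M ≤ ‖a‖ * (M + N) := by
    rw [hM]
    apply ContinuousMap.norm_le _ (by positivity) |>.2
    intro x
    have hxmem : (x : ℝ × ℝ) ∈ ⋃ i : Fin 3, sgMap i '' Δ := by rw [← hΔ]; exact x.2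
    simp only [Set.mem_iUnion, Set.mem_image] at hxmem
    obtain ⟨i, t, ht, hxt⟩ := hxmem
    have hxeq : x = ⟨sgMap i t, hmaps i ht⟩ := Subtype.ext hxt.symm
    have hbEq := hT b hb i ⟨t, ht⟩
    have hcEq := hT c hc i ⟨t, ht⟩
    have hval : (T b - T c) x = a i * ((T b ⟨t, ht⟩ - T c ⟨t, ht⟩) - (b ⟨t, ht⟩ - c ⟨t, ht⟩)) := by
      rw [hxeq]
      simp only [ContinuousMap.sub_apply]
      rw [hbEq, hcEq]; ring
    rw [hval]
    have hai : |a i| ≤ ‖a‖ := by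
      simpa using norm_le_pi_norm a i
    have hTb : ‖T b ⟨t, ht⟩ - T c ⟨t, ht⟩‖ ≤ M := by
      simpa using ContinuousMap.norm_coe_le_norm (T b - T c) ⟨t, ht⟩
    have hbc : ‖b ⟨t, ht⟩ - c ⟨t, ht⟩‖ ≤ N := by
      simpa using ContinuousMap.norm_coe_le_norm (b - c) ⟨t, ht⟩
    calc ‖a i * ((T b ⟨t, ht⟩ - T c ⟨t, ht⟩) - (b ⟨t, ht⟩ - c ⟨t, ht⟩))‖
        = |a i| * ‖(T b ⟨t, ht⟩ - T c ⟨t, ht⟩) - (b ⟨t, ht⟩ - c ⟨t, ht⟩)‖ := by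
          rw [norm_mul]; rfl
      _ ≤ ‖a‖ * (M + N) := by
          apply mul_le_mul hai _ (norm_nonneg _) h0
          calc ‖(T b ⟨t, ht⟩ - T c ⟨t, ht⟩) - (b ⟨t, ht⟩ - c ⟨t, ht⟩)‖
              ≤ ‖T b ⟨t, ht⟩ - T c ⟨t, ht⟩‖ + ‖b ⟨t, ht⟩ - c ⟨t, ht⟩‖ := norm_sub_le _ _
            _ ≤ M + N := add_le_add hTb hbc
  rw [div_mul_eq_mul_div, le_div_iff₀ h1]
  nlinarith
end
end

section
/- Let α ∈ ℝ³ be a scale vector with |α|_∞ < 1, and let f_b^α be a continuous function on Δ satisfying f_b^α(u_i(t)) = f(u_i(t)) + α_i·(f_b^α(t) − b(t)) for all t ∈ Δ and i ∈ {1,2,3}. Then ‖f_b^α − f‖_∞ ≤ (|α|_∞/(1 − |α|_∞))·‖f − b‖_∞; in particular, ‖f_b^α‖_∞ ≤ ‖f‖_∞ + (|α|_∞/(1 − |α|_∞))·‖f − b‖_∞, so f_b^α is uniformly bounded. -/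
noncomputable section

/-- `‖f_b^α - f‖_∞ ≤ (|α|_∞ / (1 - |α|_∞)) ‖f - b‖_∞`; in particular
`‖f_b^α‖_∞ ≤ ‖f‖_∞ + (|α|_∞ / (1 - |α|_∞)) ‖f - b‖_∞`, so `f_b^α` is uniformly bounded. -/
theorem sg_alpha_fractal_uniform_bound
    (Δ : Set (ℝ × ℝ)) [CompactSpace Δ] (hne : Δ.Nonempty)
    (hΔ : Δ = ⋃ i : Fin 3, sgMap i '' Δ)
    (hmaps : ∀ i : Fin 3, Set.MapsTo (sgMap i) Δ Δ)
    (hx : ∀ i : Fin 3, sgPt i ∈ Δ)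
    (f b : C(Δ, ℝ))
    (hfb : ∀ i : Fin 3, b ⟨sgPt i, hx i⟩ = f ⟨sgPt i, hx i⟩)
    (a : Fin 3 → ℝ) (ha : ‖a‖ < 1)
    (fα : C(Δ, ℝ))
    (hfα : ∀ (i : Fin 3) (t : Δ),
      fα ⟨sgMap i ↑t, hmaps i t.2⟩ = f ⟨sgMap i ↑t, hmaps i t.2⟩ + a i * (fα t - b t)) :
    ‖fα - f‖ ≤ (‖a‖ / (1 - ‖a‖)) * ‖f - b‖ ∧
      ‖fα‖ ≤ ‖f‖ + (‖a‖ / (1 - ‖a‖)) * ‖f - b‖ := by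

  have ha0 : (0:ℝ) ≤ ‖a‖ := norm_nonneg a
  have h1a : (0:ℝ) < 1 - ‖a‖ := by linarith
  have key : ‖fα - f‖ ≤ ‖a‖ * (‖fα - f‖ + ‖f - b‖) := by
    have hC : (0:ℝ) ≤ ‖a‖ * (‖fα - f‖ + ‖f - b‖) := by positivity
    rw [ContinuousMap.norm_le _ hC]
    intro x
    have hx' : (x : ℝ × ℝ) ∈ ⋃ i : Fin 3, sgMap i '' Δ := hΔ ▸ x.2
    simp only [Set.mem_iUnion, Set.mem_image] at hx'
    obtain ⟨i, t, ht, hEq⟩ := hx'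
    set T : Δ := ⟨t, ht⟩
    have hxeq : (⟨sgMap i (T : ℝ × ℝ), hmaps i T.2⟩ : Δ) = x := Subtype.ext hEq
    have h := hfα i T
    rw [hxeq] at h
    have hsub : (fα - f) x = a i * (fα T - b T) := by
      simp [ContinuousMap.sub_apply, h]
    rw [hsub]
    have hai : |a i| ≤ ‖a‖ := by
      simpa using norm_le_pi_norm a i
    have hdecomp : fα T - b T = ((fα - f) T) + ((f - b) T) := by
      simp [ContinuousMap.sub_apply]
    calc ‖a i * (fα T - b T)‖ = |a i| * ‖fα T - b T‖ := by
          simp [abs_mul, Real.norm_eq_abs]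
      _ ≤ ‖a‖ * (‖(fα - f) T‖ + ‖(f - b) T‖) := by
          rw [hdecomp]
          exact mul_le_mul hai (norm_add_le _ _) (norm_nonneg _)
            (norm_nonneg a)
      _ ≤ ‖a‖ * (‖fα - f‖ + ‖f - b‖) := by
          gcongr
          exacts [ContinuousMap.norm_coe_le_norm _ _, ContinuousMap.norm_coe_le_norm _ _]
  have h1 : ‖fα - f‖ ≤ (‖a‖ / (1 - ‖a‖)) * ‖f - b‖ := by
    rw [div_mul_eq_mul_div, le_div_iff₀ h1a]
    nlinarith [norm_nonneg (fα - f), norm_nonneg (f - b)]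
  refine ⟨h1, ?_⟩
  calc ‖fα‖ = ‖(fα - f) + f‖ := by ring_nf
    _ ≤ ‖fα - f‖ + ‖f‖ := norm_add_le _ _
    _ ≤ ‖f‖ + (‖a‖ / (1 - ‖a‖)) * ‖f - b‖ := by linarith
end
end
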